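/- Let C be a self-adjoint, bounded, positive semidefinite compact linear operator on a separable Hilbert space H whose eigenvalues satisfy σ_k(C) ≤ f(k) for all k ∈ ℕ, where f is a decreasing function. Then for all t > 0, α ≥ 0 and 1 ≤ p < ∞: ‖C^α (C + tI)^{−α}‖_p ≤ inf_{0 ≤ u ≤ 1} g_{uα} t^{−uα}, where g_{uα} := (f(1)^{uαp} + ∫_1^∞ f(x)^{uαp} dx)^{1/p}. -/

import Mathlib

open MeasureTheory ContinuousLinearMap
open scoped ENNReal NNReal InnerProductSpace

noncomputable section

namespace SubspaceLearning

variable {H : Type*} [NormedAddCommGroup H] [InnerProductSpace ℂ H] [CompleteSpace H]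

/-- The rank-one operator `x ⊗ x : u ↦ ⟨x,u⟩ x`. -/
def rankOne (x : H) : H →L[ℂ] H := (innerSL ℂ x).smulRight x

/-- The (uncentered) covariance operator of a measure. -/
def covOp [MeasurableSpace H] (ρ : Measure H) : H →L[ℂ] H := ∫ x, rankOne x ∂ρ

/-- The empirical covariance operator of `n` sample points. -/
def empCov {n : ℕ} (x : Fin n → H) : H →L[ℂ] H := (n : ℂ)⁻¹ • ∑ i, rankOne (x i)

/-- The (topological) support of a measure. -/
def mSupport [MeasurableSpace H] (ρ : Measure H) : Set H :=
  {x : H | ∀ s : Set H, IsOpen s → x ∈ s → ρ s ≠ 0}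

/-- `S_ρ`: the closed linear span of the support of `ρ`. -/
def Sspan [MeasurableSpace H] (ρ : Measure H) : Submodule ℂ H :=
  (Submodule.span ℂ (mSupport ρ)).topologicalClosure

/-- Orthogonal projection onto (the closure of) a subspace, as an endomorphism of `H`. -/
def proj (U : Submodule ℂ H) : H →L[ℂ] H :=
  haveI : CompleteSpace U.topologicalClosure :=
    U.isClosed_topologicalClosure.completeSpace_coe
  U.topologicalClosure.subtypeL.comp (Submodule.orthogonalProjection U.topologicalClosure)

/-- `approxNum A k` : the `k`-th approximation number (`= (k+1)`-th largest singular value,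
for compact `A`); for a positive compact self-adjoint operator it is the `(k+1)`-th
largest eigenvalue (with multiplicity). -/
def approxNum (A : H →L[ℂ] H) (k : ℕ) : ℝ :=
  sInf ((fun F : H →L[ℂ] H => ‖A - F‖) ''
    {F | ∃ V : Submodule ℂ H, FiniteDimensional ℂ V ∧ Module.finrank ℂ V ≤ k ∧
      LinearMap.range (F : H →ₗ[ℂ] H) ≤ V})

/-- Schatten `p`-norm, `‖A‖_p = (∑ σ_k(A)^p)^{1/p}` (operator norm for `p = ∞`). -/
def schatten (p : ℝ≥0∞) (A : H →L[ℂ] H) : ℝ≥0∞ :=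
  if p = ∞ then ENNReal.ofReal ‖A‖
  else (∑' k : ℕ, ENNReal.ofReal (approxNum A k ^ p.toReal)) ^ p.toReal⁻¹

/-- `A^α` for a positive operator `A`, via the continuous functional calculus. -/
def opow (A : H →L[ℂ] H) (α : ℝ) : H →L[ℂ] H := cfc (fun s : ℝ => s ^ α) A

/-- `(A + t I)^α` for a positive operator `A`, via the continuous functional calculus. -/
def resPow (A : H →L[ℂ] H) (t α : ℝ) : H →L[ℂ] H := cfc (fun s : ℝ => (s + t) ^ α) A

/-- The distance `d_{α,p}(U,V) = ‖(P_U − P_V) C^α‖_p`. -/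
def dap (C : H →L[ℂ] H) (α : ℝ) (p : ℝ≥0∞) (U V : Submodule ℂ H) : ℝ≥0∞ :=
  schatten p ((proj U - proj V).comp (opow C α))

/-- `W` is the span of eigenvectors of `A` corresponding to its `k` largest
eigenvalues (with multiplicity). -/
def IsTopEigenSubspace (A : H →L[ℂ] H) (k : ℕ) (W : Submodule ℂ H) : Prop :=
  ∃ u : Fin k → H, Orthonormal ℂ u ∧
    (∀ i : Fin k, A (u i) = (approxNum A (i : ℕ) : ℂ) • u i) ∧
    W = Submodule.span ℂ (Set.range u)

/-- Löwner partial order: `A ⪯ B` iff `⟨f, A f⟩ ≤ ⟨f, B f⟩` for all `f`. -/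
def Loewner (A B : H →L[ℂ] H) : Prop :=
  ∀ f : H, (⟪f, A f⟫_ℂ).re ≤ (⟪f, B f⟫_ℂ).re

/-!
The operator is `g(C)` with `g(s) = (s / (s + t))^α ≤ min(1, s/t)^α ≤ (s/t)^(uα)`. Since
`s ↦ (s/t)^(uα)` is increasing, the `k`-th approximation number of `g(C)` is at most
`(σ_k(C)/t)^(uα) ≤ (f(k+1)/t)^(uα)`: cutting `g` off below a level `σ` just above `σ_k(C)` leaves
an operator of rank `≤ k` (on its range the quadratic form of `C` exceeds `σ_k(C)`) at distance at
most `sup_{s ≤ σ} g(s)` from `g(C)`. Summing `p`-th powers and comparing the sum with the integral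
of the decreasing `f^(uαp)` gives the bound for every `u`.
-/

section ApproxNum

variable (A : H →L[ℂ] H) (k : ℕ)

omit [CompleteSpace H] in
lemma approxNum_nonneg : 0 ≤ approxNum A k :=
  Real.sInf_nonneg (by rintro _ ⟨F, -, rfl⟩; exact norm_nonneg _)

omit [CompleteSpace H] in
lemma approxNum_le_norm_sub {F : H →L[ℂ] H}
    (hF : ∃ V : Submodule ℂ H, FiniteDimensional ℂ V ∧ Module.finrank ℂ V ≤ k ∧
      LinearMap.range (F : H →ₗ[ℂ] H) ≤ V) :
    approxNum A k ≤ ‖A - F‖ :=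
  csInf_le ⟨0, by rintro _ ⟨F, -, rfl⟩; exact norm_nonneg _⟩ ⟨F, hF, rfl⟩

omit [CompleteSpace H] in
lemma exists_norm_sub_lt_of_approxNum_lt {σ : ℝ} (h : approxNum A k < σ) :
    ∃ F : H →L[ℂ] H, (∃ V : Submodule ℂ H, FiniteDimensional ℂ V ∧
      Module.finrank ℂ V ≤ k ∧ LinearMap.range (F : H →ₗ[ℂ] H) ≤ V) ∧ ‖A - F‖ < σ := by
  have hzero : ∃ V : Submodule ℂ H, FiniteDimensional ℂ V ∧ Module.finrank ℂ V ≤ k ∧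
      LinearMap.range ((0 : H →L[ℂ] H) : H →ₗ[ℂ] H) ≤ V :=
    ⟨⊥, inferInstance, by simp, by simp⟩
  obtain ⟨_, ⟨F, hF, rfl⟩, hFσ⟩ := exists_lt_of_csInf_lt (Set.Nonempty.image _ ⟨0, hzero⟩) h
  exact ⟨F, hF, hFσ⟩

omit [CompleteSpace H] in
/-- An approximant of rank `≤ k` within `σ` of `A` is injective on `W`. -/
lemma finrank_le_of_approxNum_lt {σ : ℝ} (hσ : approxNum A k < σ) (W : Submodule ℂ H)
    (hW : ∀ w ∈ W, σ * ‖w‖ ^ 2 ≤ (⟪w, A w⟫_ℂ).re) :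
    FiniteDimensional ℂ W ∧ Module.finrank ℂ W ≤ k := by
  obtain ⟨F, ⟨V, hV, hVk, hFV⟩, hAF⟩ := exists_norm_sub_lt_of_approxNum_lt A k hσ
  have hinj : ∀ w ∈ W, F w = 0 → w = 0 := by
    intro w hw hFw
    by_contra hne
    have hpos : 0 < ‖w‖ ^ 2 := by positivity
    have : σ * ‖w‖ ^ 2 ≤ ‖A - F‖ * ‖w‖ ^ 2 :=
      calc σ * ‖w‖ ^ 2 ≤ (⟪w, A w⟫_ℂ).re := hW w hw
        _ = (⟪w, (A - F) w⟫_ℂ).re := by simp [hFw]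
        _ ≤ ‖w‖ * ‖(A - F) w‖ := (Complex.re_le_norm _).trans (norm_inner_le_norm _ _)
        _ ≤ ‖w‖ * (‖A - F‖ * ‖w‖) := by gcongr; exact (A - F).le_opNorm w
        _ = ‖A - F‖ * ‖w‖ ^ 2 := by ring
    exact absurd (le_of_mul_le_mul_right this hpos) (not_le.mpr hAF)
  let ψ : W →ₗ[ℂ] V := ((F : H →ₗ[ℂ] H).domRestrict W).codRestrict V fun w => hFV ⟨w, rfl⟩
  have hψ : Function.Injective ψ := by
    rw [← LinearMap.ker_eq_bot, LinearMap.ker_eq_bot']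
    intro w hw
    exact Subtype.ext (hinj w w.2 (congrArg Subtype.val hw))
  exact ⟨.of_injective ψ hψ, (LinearMap.finrank_le_finrank_of_injective hψ).trans hVk⟩

end ApproxNum

lemma min_one_le_rpow {x u : ℝ} (hx : 0 ≤ x) (hu0 : 0 ≤ u) (hu1 : u ≤ 1) :
    min 1 x ≤ x ^ u := by
  rcases le_total x 1 with hx1 | hx1
  · rw [min_eq_right hx1]
    simpa using Real.rpow_le_rpow_of_exponent_ge' hx hx1 hu0 hu1
  · rw [min_eq_left hx1]
    exact Real.one_le_rpow hx1 hu0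

lemma rpow_mul_add_rpow_neg_le {s t α u : ℝ} (hs : 0 ≤ s) (ht : 0 < t) (hα : 0 ≤ α)
    (hu0 : 0 ≤ u) (hu1 : u ≤ 1) :
    s ^ α * (s + t) ^ (-α) ≤ (s / t) ^ (u * α) := by
  have hst : 0 < s + t := by linarith
  calc s ^ α * (s + t) ^ (-α) = (s / (s + t)) ^ α := by
        rw [Real.div_rpow hs hst.le, Real.rpow_neg hst.le, div_eq_mul_inv]
    _ ≤ (min 1 (s / t)) ^ α := by
        gcongr
        exact le_min ((div_le_one hst).mpr (by linarith)) (by gcongr; linarith)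
    _ ≤ ((s / t) ^ u) ^ α := by gcongr; exact min_one_le_rpow (by positivity) hu0 hu1
    _ = (s / t) ^ (u * α) := by rw [← Real.rpow_mul (by positivity)]

lemma ofReal_div_rpow_rpow {x t γ p : ℝ} (hx : 0 ≤ x) (ht : 0 < t) (hp : 0 ≤ p) :
    ENNReal.ofReal (((x / t) ^ γ) ^ p) =
      ENNReal.ofReal (x ^ (γ * p)) * ENNReal.ofReal (t ^ (-γ)) ^ p := by
  rw [Real.div_rpow hx ht.le, div_eq_mul_inv, ← Real.rpow_neg ht.le,
    Real.mul_rpow (by positivity) (by positivity), ← Real.rpow_mul hx,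
    ENNReal.ofReal_mul (by positivity), ENNReal.ofReal_rpow_of_nonneg (by positivity) hp]

lemma tsum_le_add_setLIntegral_Ioi {g : ℝ → ℝ≥0∞} (hg : Antitone g) (a : ℝ) :
    ∑' k : ℕ, g (a + k) ≤ g a + ∫⁻ s in Set.Ioi a, g s := by
  have hunit : ∀ k : ℕ, g (a + (k + 1 : ℕ)) ≤ ∫⁻ s in Set.Ioc (a + k) (a + k + 1), g s := by
    intro k
    calc g (a + (k + 1 : ℕ)) = ∫⁻ _ in Set.Ioc (a + k) (a + k + 1), g (a + (k + 1 : ℕ)) := by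
          simp [add_assoc]
      _ ≤ ∫⁻ s in Set.Ioc (a + k) (a + k + 1), g s :=
          setLIntegral_mono hg.measurable fun s hs => hg (by push_cast; linarith [hs.2])
  have hdisj : Pairwise (Function.onFun Disjoint fun k : ℕ => Set.Ioc (a + k) (a + k + 1)) := by
    intro i j hij
    simpa [Function.onFun] using
      Set.pairwise_disjoint_Ioc_add_intCast a (Nat.cast_injective.ne hij : (i : ℤ) ≠ j)
  calc ∑' k : ℕ, g (a + k) = g a + ∑' k : ℕ, g (a + (k + 1 : ℕ)) := by
        simpa using tsum_eq_zero_add' (f := fun k : ℕ => g (a + k)) ENNReal.summable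
    _ ≤ g a + ∑' k : ℕ, ∫⁻ s in Set.Ioc (a + k) (a + k + 1), g s := by
        gcongr with k; exact hunit k
    _ = g a + ∫⁻ s in ⋃ k : ℕ, Set.Ioc (a + k) (a + k + 1), g s := by
        rw [lintegral_iUnion (fun _ => measurableSet_Ioc) hdisj]
    _ ≤ g a + ∫⁻ s in Set.Ioi a, g s := by
        gcongr
        exact Set.iUnion_subset fun k s hs => Set.mem_Ioi.mpr (by
          linarith [hs.1, k.cast_nonneg (α := ℝ)])

lemma mul_norm_sq_le_re_inner_cfc_apply {C : H →L[ℂ] H} (hC : IsSelfAdjoint C) {h : ℝ → ℝ}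
    (hh : ContinuousOn h (spectrum ℝ C)) {σ : ℝ} (hσ : ∀ s ∈ spectrum ℝ C, s < σ → h s = 0)
    (v : H) : σ * ‖cfc h C v‖ ^ 2 ≤ (⟪cfc h C v, C (cfc h C v)⟫_ℂ).re := by
  set F := cfc h C
  have hF : IsSelfAdjoint F := cfc_predicate h C
  have hfactor : cfc (fun s => h s * ((s - σ) * h s)) C = F * ((C - σ • 1) * F) := by
    rw [cfc_mul _ _ C hh (by fun_prop), cfc_mul _ _ C (by fun_prop) hh, cfc_sub _ _ C,
      cfc_id' ℝ C, cfc_const σ C, Algebra.algebraMap_eq_smul_one]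
  have hnonneg : 0 ≤ cfc (fun s => h s * ((s - σ) * h s)) C := by
    refine cfc_nonneg fun s hs => ?_
    rcases lt_or_ge s σ with hlt | hge
    · simp [hσ s hs hlt]
    · have : h s * ((s - σ) * h s) = h s ^ 2 * (s - σ) := by ring
      rw [this]
      exact mul_nonneg (sq_nonneg _) (by linarith)
  have hquad := ((nonneg_iff_isPositive _).mp hnonneg).re_inner_nonneg_right v
  rw [hfactor] at hquad
  change 0 ≤ RCLike.re ⟪v, F (C (F v) - σ • F v)⟫_ℂ at hquad
  rw [← adjoint_inner_left, hF.adjoint_eq, inner_sub_right, map_sub, sub_nonneg,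
    ← Complex.coe_smul, inner_smul_right] at hquad
  simpa [← inner_self_eq_norm_sq (𝕜 := ℂ)] using hquad

lemma approxNum_cfc_le {C : H →L[ℂ] H} (hC : IsSelfAdjoint C) {g : ℝ → ℝ}
    (hg : ContinuousOn g (spectrum ℝ C)) (hg0 : ∀ s ∈ spectrum ℝ C, 0 ≤ g s) {k : ℕ} {σ M : ℝ}
    (hσ : approxNum C k < σ) (hM : 0 ≤ M) (hgM : ∀ s ∈ spectrum ℝ C, s ≤ σ → g s ≤ M) :
    approxNum (cfc g C) k ≤ M := by
  obtain ⟨σ', hσ', hσ'σ⟩ := exists_between hσ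
  obtain ⟨φ, hφ0, hφ1, hφI⟩ := exists_continuous_zero_one_of_isClosed isClosed_Iic isClosed_Ici
    (Set.Iic_disjoint_Ici.mpr hσ'σ.not_ge)
  have hgφ : ContinuousOn (fun s => g s * φ s) (spectrum ℝ C) := hg.mul φ.continuous.continuousOn
  set F := cfc (fun s => g s * φ s) C
  obtain ⟨hfin, hrank⟩ := finrank_le_of_approxNum_lt C k hσ' (LinearMap.range (F : H →ₗ[ℂ] H))
    (by
      rintro _ ⟨v, rfl⟩
      refine mul_norm_sq_le_re_inner_cfc_apply hC hgφ (fun s _ hs => ?_) v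
      simp [hφ0 (Set.mem_Iic.mpr hs.le)])
  calc approxNum (cfc g C) k ≤ ‖cfc g C - F‖ := approxNum_le_norm_sub _ _ ⟨_, hfin, hrank, le_rfl⟩
    _ = ‖cfc (fun s => g s * (1 - φ s)) C‖ := by
        rw [← cfc_sub g _ C hg hgφ]
        congr 2 with s
        ring
    _ ≤ M := by
        refine norm_cfc_le hM fun s hs => ?_
        have hφs := hφI s
        rw [Real.norm_eq_abs, abs_of_nonneg (mul_nonneg (hg0 s hs) (by linarith [hφs.2]))]
        rcases le_or_gt s σ with hle | hgt
        · nlinarith [hg0 s hs, hgM s hs hle, hφs.1]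
        · simp [hφ1 (Set.mem_Ici.mpr hgt.le), hM]

lemma approxNum_cfc_le_of_le {C : H →L[ℂ] H} (hC : 0 ≤ C) {g G : ℝ → ℝ}
    (hg : ContinuousOn g (spectrum ℝ C)) (hg0 : ∀ s ∈ spectrum ℝ C, 0 ≤ g s)
    (hgG : ∀ s ∈ spectrum ℝ C, g s ≤ G s) (hG0 : 0 ≤ G 0) (hG : MonotoneOn G (Set.Ici 0))
    (k : ℕ) (hGc : ContinuousWithinAt G (Set.Ioi (approxNum C k)) (approxNum C k)) :
    approxNum (cfc g C) k ≤ G (approxNum C k) := by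
  have hspec : ∀ s ∈ spectrum ℝ C, 0 ≤ s := spectrum_nonneg_of_nonneg hC
  have ha := approxNum_nonneg C k
  refine ge_of_tendsto hGc (eventually_nhdsWithin_of_forall fun σ (hσ : _ < σ) => ?_)
  refine approxNum_cfc_le (IsSelfAdjoint.of_nonneg hC) hg hg0 hσ
    (hG0.trans (hG Set.self_mem_Ici (ha.trans hσ.le) (ha.trans hσ.le))) fun s hs hsσ => ?_
  exact (hgG s hs).trans (hG (hspec s hs) (ha.trans hσ.le) hsσ)

lemma approxNum_opow_comp_resPow_le {C : H →L[ℂ] H} (hC : 0 ≤ C) {t α u : ℝ} (ht : 0 < t)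
    (hα : 0 ≤ α) (hu0 : 0 ≤ u) (hu1 : u ≤ 1) (k : ℕ) :
    approxNum ((opow C α).comp (resPow C t (-α))) k ≤ (approxNum C k / t) ^ (u * α) := by
  have hspec : ∀ s ∈ spectrum ℝ C, 0 ≤ s := spectrum_nonneg_of_nonneg hC
  have hpow : ContinuousOn (fun s : ℝ => s ^ α) (spectrum ℝ C) :=
    (Real.continuous_rpow_const hα).continuousOn
  have hres : ContinuousOn (fun s : ℝ => (s + t) ^ (-α)) (spectrum ℝ C) := fun s hs =>
    ((continuous_add_const t).continuousAt.rpow_const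
      (Or.inl (by linarith [hspec s hs]))).continuousWithinAt
  rw [opow, resPow, ← mul_def, ← cfc_mul _ _ C hpow hres]
  refine approxNum_cfc_le_of_le hC (hpow.mul hres) (fun s hs => ?_)
    (fun s hs => rpow_mul_add_rpow_neg_le (hspec s hs) ht hα hu0 hu1) (by positivity)
    (fun x hx y _ hxy => Real.rpow_le_rpow (div_nonneg hx ht.le) (by gcongr) (by positivity)) k ?_
  · exact mul_nonneg (Real.rpow_nonneg (hspec s hs) _)
      (Real.rpow_nonneg (by linarith [hspec s hs]) _)
  · exact ((continuous_id.div_const t).continuousAt.rpow_const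
      (Or.inr (by positivity))).continuousWithinAt

omit [CompleteSpace H] in
lemma schatten_le_of_approxNum_le {p : ℝ≥0∞} (hp : p ≠ ∞) {A : H →L[ℂ] H} {b : ℕ → ℝ}
    (hb : ∀ k, approxNum A k ≤ b k) :
    schatten p A ≤ (∑' k, ENNReal.ofReal (b k ^ p.toReal)) ^ p.toReal⁻¹ := by
  rw [schatten, if_neg hp]
  gcongr with k
  exacts [approxNum_nonneg A k, hb k]

theorem statement7_general (C : H →L[ℂ] H) (hpos : C.IsPositive)
    (f : ℝ → ℝ) (hf : Antitone f)
    (hfk : ∀ k : ℕ, 1 ≤ k → approxNum C (k - 1) ≤ f k)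
    {t : ℝ} (ht : 0 < t) {α : ℝ} (hα : 0 ≤ α) {p : ℝ} (hp : 1 ≤ p) :
    schatten (ENNReal.ofReal p) ((opow C α).comp (resPow C t (-α))) ≤
      ⨅ u ∈ Set.Icc (0 : ℝ) 1,
        (ENNReal.ofReal (f 1 ^ (u * α * p)) +
            ∫⁻ s in Set.Ioi (1 : ℝ), ENNReal.ofReal (f s ^ (u * α * p))) ^ p⁻¹ *
          ENNReal.ofReal (t ^ (-(u * α))) := by
  have hp0 : 0 < p := by linarith
  have hσf : ∀ k : ℕ, approxNum C k ≤ f (1 + k) := fun k => by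
    simpa [add_comm] using hfk (k + 1) (Nat.le_add_left 1 k)
  have hf0 : ∀ s, 0 ≤ f s := fun s =>
    (approxNum_nonneg C ⌈s⌉₊).trans ((hσf _).trans (hf (by linarith [Nat.le_ceil s])))
  refine le_iInf₂ fun u ⟨hu0, hu1⟩ => ?_
  have hβ : 0 ≤ u * α * p := by positivity
  have hσA : ∀ k : ℕ, approxNum ((opow C α).comp (resPow C t (-α))) k ≤
      (f (1 + k) / t) ^ (u * α) := fun k =>
    (approxNum_opow_comp_resPow_le ((nonneg_iff_isPositive C).mpr hpos) ht hα hu0 hu1 k).trans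
      (by gcongr; exacts [div_nonneg (approxNum_nonneg C k) ht.le, hσf k])
  calc schatten (ENNReal.ofReal p) ((opow C α).comp (resPow C t (-α)))
      ≤ (∑' k : ℕ, ENNReal.ofReal (((f (1 + k) / t) ^ (u * α)) ^ p)) ^ p⁻¹ := by
        simpa [ENNReal.toReal_ofReal hp0.le] using
          schatten_le_of_approxNum_le (ENNReal.ofReal_ne_top (r := p)) hσA
    _ = (∑' k : ℕ, ENNReal.ofReal (f (1 + k) ^ (u * α * p))) ^ p⁻¹ *
          ENNReal.ofReal (t ^ (-(u * α))) := by
        simp_rw [ofReal_div_rpow_rpow (hf0 _) ht hp0.le, ENNReal.tsum_mul_right]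
        rw [ENNReal.mul_rpow_of_nonneg _ _ (by positivity), ENNReal.rpow_rpow_inv hp0.ne']
    _ ≤ _ := by
        gcongr
        exact tsum_le_add_setLIntegral_Ioi (g := fun s => ENNReal.ofReal (f s ^ (u * α * p)))
          (fun x y hxy => ENNReal.ofReal_le_ofReal (Real.rpow_le_rpow (hf0 y) (hf hxy) hβ)) 1

theorem statement7 (C : H →L[ℂ] H) (hsa : IsSelfAdjoint C) (hpos : C.IsPositive)
    (hcpt : IsCompactOperator C) (f : ℝ → ℝ) (hf : Antitone f)
    (hfk : ∀ k : ℕ, 1 ≤ k → approxNum C (k - 1) ≤ f k)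
    {t : ℝ} (ht : 0 < t) {α : ℝ} (hα : 0 ≤ α) {p : ℝ} (hp : 1 ≤ p) :
    schatten (ENNReal.ofReal p) ((opow C α).comp (resPow C t (-α))) ≤
      ⨅ u ∈ Set.Icc (0 : ℝ) 1,
        (ENNReal.ofReal (f 1 ^ (u * α * p)) +
            ∫⁻ s in Set.Ioi (1 : ℝ), ENNReal.ofReal (f s ^ (u * α * p))) ^ p⁻¹ *
          ENNReal.ofReal (t ^ (-(u * α))) :=
  statement7_general C hpos f hf hfk ht hα hp

end SubspaceLearning
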